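/- Let K ⊆ V(G) be a cliquish vertex set, let 𝒞 be a non-empty subset of support(K), and let S = ⋃_{C ∈ 𝒞} N(C). If S is a proper subset of K, then crib(S, K) is outbound. -/

import Mathlib

namespace TW

variable {V : Type} [Finite V]

/-- The open neighborhood of a vertex set `U`: vertices outside `U`
adjacent to some vertex of `U`. -/
def nbhd (G : SimpleGraph V) (U : Set V) : Set V :=
  {v | v ∉ U ∧ ∃ u ∈ U, G.Adj u v}

/-- The closed neighborhood `N[U] = U ∪ N(U)`. -/
def nbhdClosed (G : SimpleGraph V) (U : Set V) : Set V :=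
  U ∪ nbhd G U

/-- A set `C` is connected in `G` if the induced subgraph `G[C]` is connected. -/
def SetConnected (G : SimpleGraph V) (C : Set V) : Prop :=
  (G.induce C).Connected

/-- `C` is a component associated with `S`: a connected component of the
subgraph of `G` induced by the complement of `S`. -/
def IsCompAssoc (G : SimpleGraph V) (S C : Set V) : Prop :=
  SetConnected G C ∧ Disjoint C S ∧ nbhd G C ⊆ S

/-- `C` is a full component associated with `S`. -/
def IsFullComp (G : SimpleGraph V) (S C : Set V) : Prop :=
  IsCompAssoc G S C ∧ nbhd G C = S

/-- `S` is a minimal separator: at least two full components are associated with `S`. -/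
def MinimalSeparator (G : SimpleGraph V) (S : Set V) : Prop :=
  ∃ C D : Set V, IsFullComp G S C ∧ IsFullComp G S D ∧ C ≠ D

/-- The number of connected components of the subgraph induced by the complement of `S`. -/
noncomputable def numComponents (G : SimpleGraph V) (S : Set V) : ℕ :=
  Nat.card (G.induce (Sᶜ : Set V)).ConnectedComponent

/-- `S` is a separator of `G`: removing `S` increases the number of connected
components of `G`. -/
def Separator (G : SimpleGraph V) (S : Set V) : Prop :=
  numComponents G (∅ : Set V) < numComponents G S

/-- `S` is cliquish: every two distinct vertices of `S` are adjacent or lie in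
the neighborhood of a common component associated with `S`. -/
def Cliquish (G : SimpleGraph V) (S : Set V) : Prop :=
  ∀ u ∈ S, ∀ v ∈ S, u ≠ v →
    G.Adj u v ∨ ∃ C, IsCompAssoc G S C ∧ u ∈ nbhd G C ∧ v ∈ nbhd G C

/-- A graph is chordal if every induced cycle has length exactly three. -/
def IsChordal {W : Type} (H : SimpleGraph W) : Prop :=
  ∀ ⦃v : W⦄ (w : H.Walk v v), w.IsCycle →
    (∀ x ∈ w.support, ∀ y ∈ w.support, H.Adj x y → s(x, y) ∈ w.edges) →
    w.length = 3

/-- `H` is a minimal chordal completion of `G`. -/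
def MinChordalCompletion {W : Type} (G H : SimpleGraph W) : Prop :=
  G ≤ H ∧ IsChordal H ∧ ∀ H' : SimpleGraph W, G ≤ H' → H' ≤ H → IsChordal H' → H' = H

/-- `Ω` is a potential maximal clique of `G`: a clique in some minimal chordal
completion of `G`. -/
def PMC {W : Type} (G : SimpleGraph W) (Ω : Set W) : Prop :=
  ∃ H : SimpleGraph W, MinChordalCompletion G H ∧ H.IsClique Ω

/-- A tree-decomposition of `G`. -/
structure TreeDecomp {W : Type} (G : SimpleGraph W) where
  ι : Type
  tree : SimpleGraph ι
  isTree : tree.IsTree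
  bag : ι → Set W
  bag_cover : ∀ v : W, ∃ i, v ∈ bag i
  bag_edge : ∀ ⦃u v : W⦄, G.Adj u v → ∃ i, u ∈ bag i ∧ v ∈ bag i
  bag_conn : ∀ v : W, (tree.induce {i | v ∈ bag i}).Connected

/-- The width of a tree-decomposition: maximum bag size minus one. -/
noncomputable def TreeDecomp.width {W : Type} {G : SimpleGraph W} (td : TreeDecomp G) : ℕ :=
  (⨆ i, (td.bag i).ncard) - 1

/-- The treewidth of `G`: the minimum width over all tree-decompositions. -/
noncomputable def treewidth {W : Type} (G : SimpleGraph W) : ℕ :=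
  ⨅ td : TreeDecomp G, td.width

/-- The graph on `V` whose edges are all pairs of distinct vertices of `S`. -/
def cliqueOn {W : Type} (S : Set W) : SimpleGraph W where
  Adj u v := u ≠ v ∧ u ∈ S ∧ v ∈ S
  symm := ⟨fun u v ⟨h, hu, hv⟩ => ⟨h.symm, hv, hu⟩⟩
  loopless := ⟨fun u ⟨h, _, _⟩ => h rfl⟩

/-- `G⟨C⟩`: the graph on `N[C]` obtained from `G[N[C]]` by completing `N(C)` into a clique. -/
def gAngle (G : SimpleGraph V) (C : Set V) : SimpleGraph ↥(nbhdClosed G C) :=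
  (G ⊔ cliqueOn (nbhd G C)).induce (nbhdClosed G C)

/-- A connected set `C` is feasible if `tw(G⟨C⟩) ≤ k`. -/
def Feasible (G : SimpleGraph V) (k : ℕ) (C : Set V) : Prop :=
  treewidth (gAngle G C) ≤ k

/-- `crib S K`: the union of `K \ S` and all components associated with `K`
that are unconfined to `S` (i.e. whose neighborhood is not contained in `S`). -/
def crib (G : SimpleGraph V) (S K : Set V) : Set V :=
  (K \ S) ∪ ⋃ C ∈ {C : Set V | IsCompAssoc G K C ∧ ¬ nbhd G C ⊆ S}, C

section Order

variable [LinearOrder V]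

/-- The minimum element of a nonempty subset of a finite linear order. -/
noncomputable def setMin (U : Set V) (hU : U.Nonempty) : V :=
  wellFounded_lt.min U hU

/-- `U ≺ W`: `min U < min W` (for nonempty sets `U`, `W`). -/
def SetPrec (U W : Set V) : Prop :=
  ∃ (hU : U.Nonempty) (hW : W.Nonempty), setMin U hU < setMin W hW

/-- A connected set `C` is inbound if some full component `A` associated with
`N(C)` satisfies `A ≺ C`. -/
def Inbound (G : SimpleGraph V) (C : Set V) : Prop :=
  SetConnected G C ∧ ∃ A, IsFullComp G (nbhd G C) A ∧ SetPrec A C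

/-- A connected set is outbound if it is not inbound. -/
def Outbound (G : SimpleGraph V) (C : Set V) : Prop :=
  SetConnected G C ∧ ¬ ∃ A, IsFullComp G (nbhd G C) A ∧ SetPrec A C

open Classical in
/-- The outlet of `K`: `∅` if no non-full outbound component is associated with `K`;
otherwise `N(A)` for a non-full outbound component `A` associated with `K`
with `N(A)` maximal. -/
noncomputable def outlet (G : SimpleGraph V) (K : Set V) : Set V :=
  if h : ∃ A, IsCompAssoc G K A ∧ nbhd G A ≠ K ∧ Outbound G A ∧
      ∀ A', IsCompAssoc G K A' → nbhd G A' ≠ K → Outbound G A' →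
        ¬ nbhd G A ⊂ nbhd G A'
  then nbhd G h.choose
  else ∅

/-- `support K`: the components associated with `K` that are unconfined to `outlet K`. -/
def support (G : SimpleGraph V) (K : Set V) : Set (Set V) :=
  {C | IsCompAssoc G K C ∧ ¬ nbhd G C ⊆ outlet G K}

/-- An O-block `(N(A), A)` (with `A` outbound and `|N(A)| ≤ k`) is feasible if
`N(A) = ⋃_{C ∈ 𝒞} N(C)` for some set `𝒞` of feasible inbound connected sets. -/
def FeasibleOBlock (G : SimpleGraph V) (k : ℕ) (A : Set V) : Prop :=
  Outbound G A ∧ (nbhd G A).ncard ≤ k ∧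
    ∃ 𝒞 : Set (Set V), (∀ C ∈ 𝒞, Inbound G C ∧ Feasible G k C) ∧
      nbhd G A = ⋃ C ∈ 𝒞, nbhd G C

/-- A potential maximal clique `Ω` is buildable. -/
def Buildable (G : SimpleGraph V) (k : ℕ) (Ω : Set V) : Prop :=
  Ω.ncard ≤ k + 1 ∧
    ((∃ v : V, Ω = nbhdClosed G {v}) ∨
     (∃ 𝒞 ⊆ support G Ω, (∀ C ∈ 𝒞, Feasible G k C) ∧ Ω = ⋃ C ∈ 𝒞, nbhd G C) ∨
     (∃ A, FeasibleOBlock G k A ∧ ∃ v ∈ nbhd G A, Ω = nbhd G A ∪ (G.neighborSet v ∩ A)))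

end Order

end TW

/-!
The crib is connected with neighbourhood `S`, i.e. a full component associated with `S`. If it
were inbound, the `≺`-least full component `B` associated with `S` would be outbound and different
from the crib, hence a non-full component associated with `K`. For a cliquish `K`, neighbourhoods
of outbound components associated with `K` form a chain: if `x ∈ N(A) \ N(B)` and
`y ∈ N(B) \ N(A)`, the component of `G - N(A)` through `y` is full and contains `B`, which
forces `A ≺ B`, and symmetrically `B ≺ A`. So `N(B) ⊆ outlet(K)`, and every `C ∈ 𝒞` has
`N(C) ⊆ S = N(B) ⊆ outlet(K)`, contradicting `C ∈ support(K)`.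
-/

namespace TW

section Components

variable {V : Type} {G : SimpleGraph V} {S X Y : Set V}

lemma SetConnected.nonempty (hX : SetConnected G X) : X.Nonempty :=
  Set.nonempty_coe_sort.mp (SimpleGraph.Connected.nonempty hX)

lemma SetConnected.reachable_of_subset (hX : SetConnected G X) (hXY : X ⊆ Y) {u v : V}
    (hu : u ∈ X) (hv : v ∈ X) : (G.induce Y).Reachable ⟨u, hXY hu⟩ ⟨v, hXY hv⟩ :=
  (hX.preconnected ⟨u, hu⟩ ⟨v, hv⟩).map (SimpleGraph.induceHomOfLE G hXY).toHom

lemma reachable_of_mem_nbhdClosed (hX : SetConnected G X) (hXY : X ⊆ Y) {a d : V}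
    (ha : a ∈ nbhdClosed G X) (haY : a ∈ Y) (hd : d ∈ X) :
    (G.induce Y).Reachable ⟨a, haY⟩ ⟨d, hXY hd⟩ := by
  rcases ha with ha | ⟨-, x, hx, hxa⟩
  · exact hX.reachable_of_subset hXY ha hd
  · exact (SimpleGraph.Adj.reachable (G := G.induce Y) (u := ⟨a, haY⟩) (v := ⟨x, hXY hx⟩)
      hxa.symm).trans (hX.reachable_of_subset hXY hx hd)

lemma setConnected_of_forall_reachable {u₀ : V} (hu₀ : u₀ ∈ Y)
    (h : ∀ v (hv : v ∈ Y), (G.induce Y).Reachable ⟨v, hv⟩ ⟨u₀, hu₀⟩) : SetConnected G Y := by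
  have : Nonempty Y := ⟨⟨u₀, hu₀⟩⟩
  exact ⟨fun ⟨a, ha⟩ ⟨b, hb⟩ => (h a ha).trans (h b hb).symm⟩

variable (G S) in
def compOf (y : V) (hy : y ∉ S) : Set V :=
  {z | ∃ hz : z ∉ S, (G.induce Sᶜ).Reachable ⟨y, hy⟩ ⟨z, hz⟩}

variable {y : V} {hy : y ∉ S}

lemma mem_compOf_self : y ∈ compOf G S y hy := ⟨hy, .refl _⟩

lemma disjoint_compOf : Disjoint (compOf G S y hy) S :=
  Set.disjoint_left.mpr fun _ hz => hz.1

lemma mem_compOf_of_adj {z w : V} (hz : z ∈ compOf G S y hy) (hzw : G.Adj z w) (hw : w ∉ S) :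
    w ∈ compOf G S y hy :=
  ⟨hw, hz.2.trans (SimpleGraph.Adj.reachable (G := G.induce Sᶜ) (u := ⟨z, hz.1⟩) hzw)⟩

lemma nbhd_compOf_subset : nbhd G (compOf G S y hy) ⊆ S := fun _ ⟨hv, _, hu, huv⟩ =>
  not_not.mp fun hvS => hv (mem_compOf_of_adj hu huv hvS)

lemma setConnected_compOf : SetConnected G (compOf G S y hy) := by
  suffices h : ∀ c : (Sᶜ : Set V), Relation.ReflTransGen (G.induce Sᶜ).Adj ⟨y, hy⟩ c →
      ∀ hc : c.1 ∈ compOf G S y hy,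
        (G.induce (compOf G S y hy)).Reachable ⟨c, hc⟩ ⟨y, mem_compOf_self⟩ from
    setConnected_of_forall_reachable mem_compOf_self fun v hv =>
      h ⟨v, hv.1⟩ ((SimpleGraph.reachable_iff_reflTransGen _ _).mp hv.2) hv
  intro c hc
  induction hc with
  | refl => exact fun _ => .refl _
  | @tail b c hyb hbc ih =>
    intro hc
    have hb : b.1 ∈ compOf G S y hy :=
      ⟨b.2, (SimpleGraph.reachable_iff_reflTransGen _ _).mpr hyb⟩
    exact (SimpleGraph.Adj.reachable (G := G.induce _) (u := ⟨c, hc⟩) (v := ⟨b, hb⟩)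
      hbc.symm).trans (ih hb)

lemma isCompAssoc_compOf : IsCompAssoc G S (compOf G S y hy) :=
  ⟨setConnected_compOf, disjoint_compOf, nbhd_compOf_subset⟩

lemma SetConnected.subset_compOf (hX : SetConnected G X) (hXS : Disjoint X S) {t : V}
    (htX : t ∈ X) (ht : t ∈ compOf G S y hy) : X ⊆ compOf G S y hy := fun _ hz =>
  ⟨Set.disjoint_left.mp hXS hz,
    ht.2.trans (hX.reachable_of_subset (Set.subset_compl_iff_disjoint_right.mpr hXS) htX hz)⟩

lemma SetConnected.subset_compOf_of_mem_nbhd (hX : SetConnected G X) (hXS : Disjoint X S)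
    (hyX : y ∈ nbhd G X) : X ⊆ compOf G S y hy := by
  obtain ⟨-, x, hx, hxy⟩ := hyX
  exact hX.subset_compOf hXS hx (mem_compOf_of_adj mem_compOf_self hxy.symm
    (Set.disjoint_left.mp hXS hx))

lemma IsCompAssoc.compOf_subset (hX : IsCompAssoc G S X) (hyX : y ∈ X) :
    compOf G S y hy ⊆ X := by
  rintro z ⟨hz, hr⟩
  suffices h : ∀ c : (Sᶜ : Set V), Relation.ReflTransGen (G.induce Sᶜ).Adj ⟨y, hy⟩ c → c.1 ∈ X
    from h ⟨z, hz⟩ ((SimpleGraph.reachable_iff_reflTransGen _ _).mp hr)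
  intro c hc
  induction hc with
  | refl => exact hyX
  | @tail b c _ hbc ih => exact not_not.mp fun hc => c.2 (hX.2.2 ⟨hc, b, ih, hbc⟩)

lemma IsCompAssoc.eq_compOf (hX : IsCompAssoc G S X) (hyX : y ∈ X) : X = compOf G S y hy :=
  (hX.1.subset_compOf hX.2.1 hyX mem_compOf_self).antisymm (hX.compOf_subset hyX)

lemma IsCompAssoc.disjoint_of_ne (hX : IsCompAssoc G S X) (hY : IsCompAssoc G S Y)
    (hXY : X ≠ Y) : Disjoint X Y :=
  Set.disjoint_left.mpr fun _ htX htY => hXY <|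
    (hX.eq_compOf (hy := Set.disjoint_left.mp hX.2.1 htX) htX).trans
      (hY.eq_compOf htY).symm

lemma Cliquish.isFullComp_compOf {K T : Set V} (hK : Cliquish G K) (hT : IsCompAssoc G K T)
    (hyK : y ∈ K) (hyT : y ∉ nbhd G T) :
    IsFullComp G (nbhd G T) (compOf G (nbhd G T) y hyT) := by
  refine ⟨isCompAssoc_compOf, nbhd_compOf_subset.antisymm fun w hwT => ?_⟩
  have hwB : w ∉ compOf G (nbhd G T) y hyT := fun h => h.1 hwT
  have hwy : w ≠ y := fun h => hyT (h ▸ hwT)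
  rcases hK w (hT.2.2 hwT) y hyK hwy with hadj | ⟨D, hD, hwD, hyD⟩
  · exact ⟨hwB, y, mem_compOf_self, hadj.symm⟩
  · have hDB : D ⊆ compOf G (nbhd G T) y hyT :=
      hD.1.subset_compOf_of_mem_nbhd (hD.2.1.mono_right hT.2.2) hyD
    obtain ⟨-, d, hd, hdw⟩ := hwD
    exact ⟨hwB, d, hDB hd, hdw⟩

end Components

section Crib

variable {V : Type} {G : SimpleGraph V} {S K B : Set V}

lemma mem_crib {v : V} :
    v ∈ crib G S K ↔ v ∈ K \ S ∨ ∃ D, (IsCompAssoc G K D ∧ ¬ nbhd G D ⊆ S) ∧ v ∈ D := by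
  simp only [crib, Set.mem_union, Set.mem_iUnion, Set.mem_ofPred_eq, exists_prop]

lemma diff_subset_crib : K \ S ⊆ crib G S K := Set.subset_union_left

lemma subset_crib {D : Set V} (hD : IsCompAssoc G K D) (hDS : ¬ nbhd G D ⊆ S) :
    D ⊆ crib G S K := fun _ hv => mem_crib.mpr (.inr ⟨D, ⟨hD, hDS⟩, hv⟩)

lemma disjoint_crib (hSK : S ⊆ K) : Disjoint (crib G S K) S := by
  refine Set.disjoint_left.mpr fun v hv hvS => ?_
  rcases mem_crib.mp hv with hvK | ⟨D, ⟨hD, -⟩, hvD⟩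
  · exact hvK.2 hvS
  · exact Set.disjoint_left.mp hD.2.1 hvD (hSK hvS)

lemma Cliquish.setConnected_crib (hK : Cliquish G K) (hSK : S ⊂ K) :
    SetConnected G (crib G S K) := by
  obtain ⟨u₀, hu₀⟩ := Set.exists_of_ssubset hSK
  have hreach : ∀ u (hu : u ∈ K \ S),
      (G.induce (crib G S K)).Reachable ⟨u, diff_subset_crib hu⟩ ⟨u₀, diff_subset_crib hu₀⟩ := by
    intro u hu
    by_cases hu' : u = u₀
    · subst hu'; rfl
    rcases hK u hu.1 u₀ hu₀.1 hu' with hadj | ⟨D, hD, huD, hu₀D⟩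
    · exact SimpleGraph.Adj.reachable (G := G.induce _) hadj
    · have hDS : ¬ nbhd G D ⊆ S := fun h => hu₀.2 (h hu₀D)
      obtain ⟨d, hd, -⟩ := huD.2
      exact (reachable_of_mem_nbhdClosed hD.1 (subset_crib hD hDS) (.inr huD) _ hd).trans
        (reachable_of_mem_nbhdClosed hD.1 (subset_crib hD hDS) (.inr hu₀D) _ hd).symm
  refine setConnected_of_forall_reachable (diff_subset_crib hu₀) fun v hv => ?_
  rcases mem_crib.mp hv with hvK | ⟨D, ⟨hD, hDS⟩, hvD⟩
  · exact hreach v hvK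
  · obtain ⟨u, huD, huS⟩ := Set.not_subset.mp hDS
    have hu : u ∈ K \ S := ⟨hD.2.2 huD, huS⟩
    exact (reachable_of_mem_nbhdClosed hD.1 (subset_crib hD hDS) (.inr huD)
      (diff_subset_crib hu) hvD).symm.trans (hreach u hu)

lemma Cliquish.nbhd_crib (hK : Cliquish G K) (hSK : S ⊂ K) : nbhd G (crib G S K) = S := by
  apply Set.Subset.antisymm
  · rintro v ⟨hv, w, hw, hwv⟩
    by_contra hvS
    by_cases hvK : v ∈ K
    · exact hv (diff_subset_crib ⟨hvK, hvS⟩)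
    rcases mem_crib.mp hw with hwK | ⟨D, ⟨hD, hDS⟩, hwD⟩
    · have hwC : w ∈ nbhd G (compOf G K v hvK) :=
        ⟨fun h => h.1 hwK.1, v, mem_compOf_self, hwv.symm⟩
      exact hv (subset_crib isCompAssoc_compOf (fun h => hwK.2 (h hwC)) mem_compOf_self)
    · exact hvK (hD.2.2 ⟨fun hvD => hv (subset_crib hD hDS hvD), w, hwD, hwv⟩)
  · intro s hs
    obtain ⟨u₀, hu₀⟩ := Set.exists_of_ssubset hSK
    have hs' : s ∉ crib G S K := fun h => Set.disjoint_left.mp (disjoint_crib hSK.le) h hs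
    rcases hK s (hSK.le hs) u₀ hu₀.1 (fun h => hu₀.2 (h ▸ hs)) with hadj | ⟨D, hD, hsD, hu₀D⟩
    · exact ⟨hs', u₀, diff_subset_crib hu₀, hadj.symm⟩
    · obtain ⟨d, hd, hds⟩ := hsD.2
      exact ⟨hs', d, subset_crib hD (fun h => hu₀.2 (h hu₀D)) hd, hds⟩

lemma Cliquish.isFullComp_crib (hK : Cliquish G K) (hSK : S ⊂ K) :
    IsFullComp G S (crib G S K) :=
  ⟨⟨hK.setConnected_crib hSK, disjoint_crib hSK.le, (hK.nbhd_crib hSK).le⟩, hK.nbhd_crib hSK⟩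

lemma IsCompAssoc.isCompAssoc_of_ne_crib (hB : IsCompAssoc G S B) (hK : Cliquish G K)
    (hSK : S ⊂ K) (hne : B ≠ crib G S K) : IsCompAssoc G K B := by
  have hBc := hB.disjoint_of_ne (hK.isFullComp_crib hSK).1 hne
  refine ⟨hB.1, Set.disjoint_left.mpr fun v hvB hvK => ?_, hB.2.2.trans hSK.le⟩
  exact Set.disjoint_left.mp hBc hvB (diff_subset_crib ⟨hvK, Set.disjoint_left.mp hB.2.1 hvB⟩)

end Crib

section Order

variable {V : Type} [Finite V] [LinearOrder V] {G : SimpleGraph V} {S U W W' : Set V}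

lemma setMin_mem (hU : U.Nonempty) : setMin U hU ∈ U :=
  WellFounded.min_mem _ U hU

lemma setMin_le (hU : U.Nonempty) {x : V} (hx : x ∈ U) : setMin U hU ≤ x :=
  le_of_not_gt (WellFounded.not_lt_min _ U hx)

lemma SetPrec.irrefl : ¬ SetPrec U U := fun ⟨_, _, h⟩ => lt_irrefl _ h

lemma SetPrec.trans (hUW : SetPrec U W) (hWW' : SetPrec W W') : SetPrec U W' := by
  obtain ⟨hU, _, h₁⟩ := hUW
  obtain ⟨_, hW', h₂⟩ := hWW'
  exact ⟨hU, hW', h₁.trans h₂⟩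

lemma SetPrec.of_subset_right (h : SetPrec U W) (hW'W : W' ⊆ W) (hW' : W'.Nonempty) :
    SetPrec U W' := by
  obtain ⟨hU, hW, hlt⟩ := h
  exact ⟨hU, hW', hlt.trans_le (setMin_le hW (hW'W (setMin_mem hW')))⟩

lemma setPrec_or_setPrec_of_disjoint (hUW : Disjoint U W) (hU : U.Nonempty)
    (hW : W.Nonempty) : SetPrec U W ∨ SetPrec W U := by
  rcases lt_trichotomy (setMin U hU) (setMin W hW) with h | h | h
  · exact .inl ⟨hU, hW, h⟩
  · exact (Set.disjoint_left.mp hUW (setMin_mem hU) (h ▸ setMin_mem hW)).elim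
  · exact .inr ⟨hW, hU, h⟩

lemma exists_outbound_isFullComp (h : ∃ A, IsFullComp G S A) :
    ∃ B, IsFullComp G S B ∧ Outbound G B := by
  have : IsTrans (Set V) SetPrec := ⟨fun _ _ _ => SetPrec.trans⟩
  have : Std.Irrefl (SetPrec (V := V)) := ⟨fun _ => SetPrec.irrefl⟩
  obtain ⟨B, hB, hmin⟩ := (Finite.wellFounded_of_trans_of_irrefl SetPrec).has_min _ h
  exact ⟨B, hB, hB.1.1, fun ⟨A, hA, hAB⟩ => hmin A (hB.2 ▸ hA) hAB⟩

end Order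

section Outlet

variable {V : Type} [Finite V] [LinearOrder V] {G : SimpleGraph V} {K A B : Set V}

lemma Cliquish.setPrec_of_outbound (hK : Cliquish G K) (hA : IsCompAssoc G K A)
    (hAout : Outbound G A) (hB : IsCompAssoc G K B) {y : V} (hyB : y ∈ nbhd G B)
    (hyA : y ∉ nbhd G A) : SetPrec A B := by
  have hyK : y ∈ K := hB.2.2 hyB
  set F := compOf G (nbhd G A) y hyA
  have hF : IsFullComp G (nbhd G A) F := hK.isFullComp_compOf hA hyK hyA
  have hBF : B ⊆ F := hB.1.subset_compOf_of_mem_nbhd (hB.2.1.mono_right hA.2.2) hyB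
  have hA' : IsCompAssoc G (nbhd G A) A :=
    ⟨hA.1, Set.disjoint_left.mpr fun _ ha ha' => ha'.1 ha, subset_rfl⟩
  have hFA : F ≠ A := fun h => Set.disjoint_left.mp hA.2.1 (h ▸ mem_compOf_self) hyK
  rcases setPrec_or_setPrec_of_disjoint (hF.1.disjoint_of_ne hA' hFA) hF.1.1.nonempty
    hA.1.nonempty with hFA | hAF
  · exact absurd ⟨F, hF, hFA⟩ hAout.2
  · exact hAF.of_subset_right hBF hB.1.nonempty

lemma Cliquish.nbhd_subset_or_subset_of_outbound (hK : Cliquish G K)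
    (hA : IsCompAssoc G K A) (hAout : Outbound G A)
    (hB : IsCompAssoc G K B) (hBout : Outbound G B) :
    nbhd G A ⊆ nbhd G B ∨ nbhd G B ⊆ nbhd G A := by
  by_contra! ⟨hAB, hBA⟩
  obtain ⟨x, hxA, hxB⟩ := Set.not_subset.mp hAB
  obtain ⟨y, hyB, hyA⟩ := Set.not_subset.mp hBA
  exact SetPrec.irrefl ((hK.setPrec_of_outbound hA hAout hB hyB hyA).trans
    (hK.setPrec_of_outbound hB hBout hA hxA hxB))

lemma Cliquish.nbhd_subset_outlet (hK : Cliquish G K) (hB : IsCompAssoc G K B)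
    (hBK : nbhd G B ≠ K) (hBout : Outbound G B) : nbhd G B ⊆ outlet G K := by
  have hex : ∃ A, IsCompAssoc G K A ∧ nbhd G A ≠ K ∧ Outbound G A ∧
      ∀ A', IsCompAssoc G K A' → nbhd G A' ≠ K → Outbound G A' →
        ¬ nbhd G A ⊂ nbhd G A' := by
    obtain ⟨A, ⟨hA, hAK, hAout⟩, hmax⟩ := Set.Finite.exists_maximalFor (nbhd G)
      {A | IsCompAssoc G K A ∧ nbhd G A ≠ K ∧ Outbound G A} (Set.toFinite _)
      ⟨B, hB, hBK, hBout⟩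
    exact ⟨A, hA, hAK, hAout, fun A' h₁ h₂ h₃ hss => hss.2 (hmax ⟨h₁, h₂, h₃⟩ hss.1)⟩
  rw [outlet, dif_pos hex]
  obtain ⟨hA, -, hAout, hAmax⟩ := hex.choose_spec
  rcases hK.nbhd_subset_or_subset_of_outbound hB hBout hA hAout with hBA | hAB
  · exact hBA
  · by_contra hBA
    exact hAmax B hB hBK hBout (hAB.ssubset_of_not_subset hBA)

end Outlet

theorem crib_outbound_general {V : Type} [Finite V] [LinearOrder V] (G : SimpleGraph V)
    (K : Set V) (hK : Cliquish G K) (𝒞 : Set (Set V))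
    (h𝒞 : 𝒞 ⊆ support G K) (hne : 𝒞.Nonempty) (S : Set V)
    (hS : S = ⋃ C ∈ 𝒞, nbhd G C) (hSK : S ⊂ K) :
    Outbound G (crib G S K) := by
  have hcrib := hK.isFullComp_crib hSK
  refine ⟨hcrib.1.1, fun ⟨A, hA, hAcrib⟩ => ?_⟩
  obtain ⟨B, hB, hBout⟩ := exists_outbound_isFullComp ⟨A, hcrib.2 ▸ hA⟩
  have hBcrib : B ≠ crib G S K := by
    rintro rfl
    exact hBout.2 ⟨A, hA, hAcrib⟩
  obtain ⟨C, hC⟩ := hne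
  apply (h𝒞 hC).2
  calc nbhd G C ⊆ S := hS ▸ Set.subset_biUnion_of_mem (u := nbhd G) hC
    _ = nbhd G B := hB.2.symm
    _ ⊆ outlet G K := hK.nbhd_subset_outlet (hB.1.isCompAssoc_of_ne_crib hK hSK hBcrib)
        (hB.2 ▸ hSK.ne) hBout

/-- If `K` is cliquish, `𝒞` is a nonempty subset of `support K`, and
`S = ⋃_{C ∈ 𝒞} N(C)` is a proper subset of `K`, then `crib S K` is outbound. -/
theorem crib_outbound {V : Type} [Finite V] [LinearOrder V] (G : SimpleGraph V)
    (hG : G.Connected) (K : Set V) (hK : Cliquish G K) (𝒞 : Set (Set V))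
    (h𝒞 : 𝒞 ⊆ support G K) (hne : 𝒞.Nonempty) (S : Set V)
    (hS : S = ⋃ C ∈ 𝒞, nbhd G C) (hSK : S ⊂ K) :
    Outbound G (crib G S K) :=
  crib_outbound_general G K hK 𝒞 h𝒞 hne S hS hSK

end TW
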